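/- Let M be an (n,r)-matroid and let H ⊆ {1,…,n} be simultaneously a circuit and a hyperplane of M, and let M′ be the relaxation of M at H (the matroid whose bases are the bases of M together with H). Then G(M′) − G(M) = r!(n−r)!·([1^r 0^{n−r}] − [1^{r−1} 0 1 0^{n−r−1}]) in G(n,r), and T(M′;x,y) − T(M;x,y) = x + y − xy in K[x,y]. -/

import Mathlib

open MvPolynomial
open scoped Classical

/-- The dominance order on bit sequences: `Dominates s t` means `s ⊵ t`, i.e. every
prefix of `s` has at least as many `1`s (`true`s) as the corresponding prefix of `t`. -/
def Dominates (s t : List Bool) : Prop :=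
  ∀ j : ℕ, (t.take j).count true ≤ (s.take j).count true

/-- The indicator bit sequence of a subset `B` of `{1,…,n}` (modelled as `Fin n`). -/
def indList {n : ℕ} (B : Finset (Fin n)) : List Bool :=
  List.ofFn fun i : Fin n => decide (i ∈ B)

/-- The finset of `(n,r)`-sequences: bit sequences of length `n` with exactly `r` ones. -/
def seqs (n r : ℕ) : Finset (List Bool) :=
  ((Finset.univ : Finset (Fin n → Bool)).image List.ofFn).filter fun l => l.count true = r

/-- The Tutte polynomial determined by a rank function `rk` on subsets of an `n`-element
ground set, where `r` is the rank of the whole ground set.  The variable `X 0` plays the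
role of `x` and `X 1` plays the role of `y`. -/
noncomputable def tutte (K : Type*) [Field K] {n : ℕ} (r : ℕ) (rk : Finset (Fin n) → ℕ) :
    MvPolynomial (Fin 2) K :=
  ∑ A : Finset (Fin n), (X 0 - 1) ^ (r - rk A) * (X 1 - 1) ^ (A.card - rk A)

/-- `B` is a basis of the freedom matroid `F(s)`: it has `wt s` elements and its
indicator sequence is dominated by `s`. -/
def IsFreedomBasis (s : List Bool) (B : Finset (Fin s.length)) : Prop :=
  B.card = s.count true ∧ Dominates s (indList B)

/-- The rank function of the freedom matroid `F(s)`: the rank of a set is the largest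
size of its intersection with a basis. -/
noncomputable def freedomRk (s : List Bool) (A : Finset (Fin s.length)) : ℕ :=
  (Finset.univ.filter fun B => IsFreedomBasis s B).sup fun B => (A ∩ B).card

/-- The Tutte polynomial of the freedom matroid `F(s)`. -/
noncomputable def freedomTutte (K : Type*) [Field K] (s : List Bool) :
    MvPolynomial (Fin 2) K :=
  tutte K (s.count true) (freedomRk s)

/-- The rank of a set in a matroid: the largest cardinality of an independent subset. -/
noncomputable def mrank {n : ℕ} (M : Matroid (Fin n)) (A : Set (Fin n)) : ℕ :=
  (Finset.univ.filter fun I : Finset (Fin n) =>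
    M.Indep ↑I ∧ (↑I : Set (Fin n)) ⊆ A).sup Finset.card

/-- The set `{π(1),…,π(m)}` of the first `m` values of a permutation. -/
def prefFinset {n : ℕ} (π : Equiv.Perm (Fin n)) (m : ℕ) : Finset (Fin n) :=
  (Finset.univ.filter fun i : Fin n => (i : ℕ) < m).image π

/-- The rank sequence of a permutation `π` with respect to a rank function `rk`:
its `j`-th entry is `1` (`true`) exactly when `rk {π(1),…,π(j)} = rk {π(1),…,π(j-1)} + 1`. -/
def rankSeq {n : ℕ} (rk : Finset (Fin n) → ℕ) (π : Equiv.Perm (Fin n)) : List Bool :=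
  List.ofFn fun j : Fin n =>
    decide (rk (prefFinset π ((j : ℕ) + 1)) = rk (prefFinset π (j : ℕ)) + 1)

/-- `gCoeff rk l` is the number of permutations of the ground set whose rank sequence
is the bit sequence `l`; these are the coefficients of the `G`-invariant. -/
noncomputable def gCoeff {n : ℕ} (rk : Finset (Fin n) → ℕ) (l : List Bool) : ℕ :=
  (Finset.univ.filter fun π : Equiv.Perm (Fin n) => rankSeq rk π = l).card

/-- The `G`-invariant, as an element of the free `K`-module on all bit sequences. -/
noncomputable def Ginv (K : Type*) [Field K] {n : ℕ} (rk : Finset (Fin n) → ℕ) :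
    List Bool →₀ K :=
  ∑ π : Equiv.Perm (Fin n), Finsupp.single (rankSeq rk π) 1

/-- The value of the specialization `Sp` on the symbol `[l]`. -/
noncomputable def spPoly (K : Type*) [Field K] (l : List Bool) : MvPolynomial (Fin 2) K :=
  ∑ m ∈ Finset.range (l.length + 1),
    ((m.factorial * (l.length - m).factorial : ℕ) : K)⁻¹ •
      ((X 0 - 1) ^ (l.count true - (l.take m).count true) *
        (X 1 - 1) ^ (m - (l.take m).count true))

/-- The specialization `Sp` as a linear map on the free module on bit-sequence symbols. -/
noncomputable def SpMap (K : Type*) [Field K] :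
    (List Bool →₀ K) →ₗ[K] MvPolynomial (Fin 2) K :=
  Finsupp.linearCombination K (spPoly K)

/-- `G(n,r)`: the span of the `(n,r)`-sequence symbols, a subspace of dimension
`binomial(n,r)` of the free module on all bit sequences. -/
noncomputable def Gspace (K : Type*) [Field K] (n r : ℕ) : Submodule K (List Bool →₀ K) :=
  Submodule.span K ((fun l => Finsupp.single l (1 : K)) '' ↑(seqs n r))

/-- `T(n,r)`: the span of the Tutte polynomials of all `(n,r)`-matroids. -/
noncomputable def Tspace (K : Type*) [Field K] (n r : ℕ) :
    Submodule K (MvPolynomial (Fin 2) K) :=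
  Submodule.span K {p | ∃ M : Matroid (Fin n), M.E = Set.univ ∧ mrank M Set.univ = r ∧
    p = tutte K r fun A : Finset (Fin n) => mrank M ↑A}

/-- The bit sequence `0^a 1^b 0^c 1^d` associated to a quadruple `(a,b,c,d)`;
such sequences are the join-irreducible ones. -/
def joinList (q : ℕ × ℕ × ℕ × ℕ) : List Bool :=
  List.replicate q.1 false ++ List.replicate q.2.1 true ++
    List.replicate q.2.2.1 false ++ List.replicate q.2.2.2 true

/-- The bit sequence `1^a 0^b 1^c 0^d` associated to a quadruple `(a,b,c,d)`;
such sequences are the meet-irreducible ones. -/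
def meetList (q : ℕ × ℕ × ℕ × ℕ) : List Bool :=
  List.replicate q.1 true ++ List.replicate q.2.1 false ++
    List.replicate q.2.2.1 true ++ List.replicate q.2.2.2 false

/-- Quadruples `(a,b,c,d)` with `a+b+c+d = n` and `b+d = r`, indexing the
join-irreducible `(n,r)`-sequences `0^a 1^b 0^c 1^d`. -/
def joinIdx (n r : ℕ) : Type :=
  {q : ℕ × ℕ × ℕ × ℕ // q.1 + q.2.1 + q.2.2.1 + q.2.2.2 = n ∧ q.2.1 + q.2.2.2 = r}

/-- Quadruples `(a,b,c,d)` with `a+b+c+d = n` and `a+c = r`, indexing the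
meet-irreducible `(n,r)`-sequences `1^a 0^b 1^c 0^d`. -/
def meetIdx (n r : ℕ) : Type :=
  {q : ℕ × ℕ × ℕ × ℕ // q.1 + q.2.1 + q.2.2.1 + q.2.2.2 = n ∧ q.1 + q.2.2.1 = r}

/-- `f(u) = T(F(u); 1, y)`. -/
noncomputable def fEval (K : Type*) [Field K] (u : List Bool) : MvPolynomial (Fin 2) K :=
  MvPolynomial.aeval (fun i : Fin 2 => if i = 0 then 1 else X 1) (freedomTutte K u)

/-- `g(u) = T(F(u); x, 1)`. -/
noncomputable def gEval (K : Type*) [Field K] (u : List Bool) : MvPolynomial (Fin 2) K :=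
  MvPolynomial.aeval (fun i : Fin 2 => if i = 0 then X 0 else 1) (freedomTutte K u)

/-- `τ(u) = T(F(u); 1, 1)`. -/
noncomputable def tauEval (K : Type*) [Field K] (u : List Bool) : MvPolynomial (Fin 2) K :=
  MvPolynomial.aeval (fun _ : Fin 2 => (1 : MvPolynomial (Fin 2) K)) (freedomTutte K u)

/-!
Relaxing the circuit-hyperplane `H` changes the rank function only at `H` itself: there `M` has
rank `r - 1` (a circuit of size `r`) and `M′` has rank `r` (a basis). Any other set `A` has the
same rank in both: if `H ⊄ A` the two matroids have the same independent subsets of `A`, and if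
`H ⊊ A` both ranks are `r`, because `H` is a flat of rank `r - 1`. So the Tutte polynomials differ
only in the summand of `H`, which is `1 - (x - 1)(y - 1)`, and the rank sequences of a permutation
differ only when its first `r` values form `H`; for these `r!(n-r)!` permutations they are
`1^r 0^{n-r}` and `1^{r-1} 0 1 0^{n-r-1}`.
-/

namespace Matroid

variable {α : Type*} {M M' : Matroid α} {H I X : Set α}

def IsRelaxation (M' M : Matroid α) (H : Set α) : Prop :=
  ∀ B, M'.IsBase B ↔ M.IsBase B ∨ B = H

lemma eRk_le_eRk_of_indep_imp (h : ∀ I ⊆ X, M.Indep I → M'.Indep I) : M.eRk X ≤ M'.eRk X :=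
  eRk_le_iff.2 fun _ hIX hI => (h _ hIX hI).encard_le_eRk_of_subset hIX

namespace IsRelaxation

variable (hrel : M'.IsRelaxation M H)
include hrel

lemma isBase_self : M'.IsBase H := (hrel H).2 (.inr rfl)

lemma indep_iff (hH : M.IsCircuit H) : M'.Indep I ↔ M.Indep I ∨ I = H := by
  refine ⟨fun hI => ?_, ?_⟩
  · obtain ⟨B, hB, hIB⟩ := Matroid.indep_iff.1 hI
    obtain hB | rfl := (hrel B).1 hB
    · exact .inl (hB.indep.subset hIB)
    · exact (hIB.eq_or_ssubset.imp_right hH.ssubset_indep).symm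
  · rintro (hI | rfl)
    · obtain ⟨B, hB, hIB⟩ := Matroid.indep_iff.1 hI
      exact Matroid.indep_iff.2 ⟨B, (hrel B).2 (.inl hB), hIB⟩
    · exact hrel.isBase_self.indep

lemma eRank_eq : M'.eRank = M.eRank := by
  obtain ⟨B, hB⟩ := M.exists_isBase
  rw [← hB.encard_eq_eRank, ← ((hrel B).2 (.inl hB)).encard_eq_eRank]

lemma encard_eq_eRank : H.encard = M.eRank := by
  rw [hrel.isBase_self.encard_eq_eRank, hrel.eRank_eq]

lemma eRk_self : M'.eRk H = M.eRank := by
  rw [hrel.isBase_self.eRk_eq_eRank, hrel.eRank_eq]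

lemma eRk_add_one (hH : M.IsCircuit H) : M.eRk H + 1 = M.eRank := by
  rw [hH.eRk_add_one_eq, hrel.encard_eq_eRank]

lemma eRk_eq_eRank_of_ssuperset (hH : M.IsCircuit H) (hF : M.IsFlat H) (hHX : H ⊂ X)
    (hXE : X ⊆ M.E) : M.eRk X = M.eRank := by
  obtain ⟨x, hxX, hxH⟩ := Set.exists_of_ssubset hHX
  refine le_antisymm (M.eRk_le_eRank X) ?_
  calc M.eRank = M.eRk H + 1 := (hrel.eRk_add_one hH).symm
    _ = M.eRk (insert x H) := (eRk_insert_eq_add_one ⟨hXE hxX, by rwa [hF.closure]⟩).symm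
    _ ≤ M.eRk X := M.eRk_mono (Set.insert_subset hxX hHX.subset)

lemma eRk_eq (hH : M.IsCircuit H) (hF : M.IsFlat H) (hXH : X ≠ H) (hXE : X ⊆ M.E) :
    M'.eRk X = M.eRk X := by
  refine le_antisymm ?_ (eRk_le_eRk_of_indep_imp fun _ _ hI => (hrel.indep_iff hH).2 (.inl hI))
  by_cases hHX : H ⊆ X
  · rw [hrel.eRk_eq_eRank_of_ssuperset hH hF (hHX.ssubset_of_ne hXH.symm) hXE, ← hrel.eRank_eq]
    exact M'.eRk_le_eRank X
  · refine eRk_le_eRk_of_indep_imp fun I hIX hI => ((hrel.indep_iff hH).1 hI).resolve_right ?_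
    rintro rfl
    exact hHX hIX

end IsRelaxation

end Matroid

open Finset

lemma coe_mrank_eq_eRk {n : ℕ} (M : Matroid (Fin n)) (A : Set (Fin n)) :
    (mrank M A : ℕ∞) = M.eRk A := by
  refine le_antisymm ?_ (Matroid.eRk_le_iff.2 fun I hIA hI => ?_)
  · obtain ⟨I, hI, hIc⟩ := exists_mem_eq_sup
      {I : Finset (Fin n) | M.Indep ↑I ∧ (↑I : Set (Fin n)) ⊆ A} ⟨∅, by simp⟩ card
    rw [mem_filter] at hI
    rw [mrank, hIc, ← Set.encard_coe_eq_coe_finsetCard]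
    exact hI.2.1.encard_le_eRk_of_subset hI.2.2
  · lift I to Finset (Fin n) using I.toFinite
    rw [Set.encard_coe_eq_coe_finsetCard, Nat.cast_le]
    exact le_sup (by simp [hI, hIA])

lemma Matroid.eRank_eq_mrank_univ {n : ℕ} (M : Matroid (Fin n)) : M.eRank = mrank M Set.univ := by
  rw [← M.eRk_univ_eq, coe_mrank_eq_eRk]

lemma Matroid.IsCircuit.mrank_of_ssubset {n : ℕ} {M : Matroid (Fin n)} {H A : Finset (Fin n)}
    (hH : M.IsCircuit ↑H) (hA : A ⊂ H) : mrank M ↑A = #A := by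
  have hind : M.Indep ↑A := hH.ssubset_indep (by exact_mod_cast hA)
  exact_mod_cast (coe_mrank_eq_eRk M A).trans
    (hind.eRk_eq_encard.trans (Set.encard_coe_eq_coe_finsetCard A))

namespace Matroid.IsRelaxation

variable {n r : ℕ} {M M' : Matroid (Fin n)} {H : Finset (Fin n)}
  (hrel : M'.IsRelaxation M ↑H)
include hrel

lemma mrank_eq (hE : M.E = Set.univ) (hH : M.IsCircuit ↑H) (hF : M.IsFlat ↑H) {A : Set (Fin n)}
    (hA : A ≠ ↑H) : mrank M' A = mrank M A := by
  exact_mod_cast (coe_mrank_eq_eRk M' A).trans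
    ((hrel.eRk_eq hH hF hA (hE ▸ Set.subset_univ A)).trans (coe_mrank_eq_eRk M A).symm)

variable (hr : mrank M Set.univ = r)
include hr

lemma card_eq : #H = r := by
  have := hrel.encard_eq_eRank
  rw [Set.encard_coe_eq_coe_finsetCard, eRank_eq_mrank_univ, hr] at this
  exact_mod_cast this

lemma mrank_self : mrank M' ↑H = r := by
  have := hrel.eRk_self
  rw [← coe_mrank_eq_eRk, eRank_eq_mrank_univ, hr] at this
  exact_mod_cast this

lemma mrank_add_one (hH : M.IsCircuit ↑H) : mrank M ↑H + 1 = r := by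
  have := hrel.eRk_add_one hH
  rw [← coe_mrank_eq_eRk, eRank_eq_mrank_univ, hr] at this
  exact_mod_cast this

lemma mrank_of_ssuperset (hE : M.E = Set.univ) (hH : M.IsCircuit ↑H) (hF : M.IsFlat ↑H)
    {A : Set (Fin n)} (hA : ↑H ⊂ A) : mrank M A = r := by
  have := hrel.eRk_eq_eRank_of_ssuperset hH hF hA (hE ▸ Set.subset_univ A)
  rw [← coe_mrank_eq_eRk, eRank_eq_mrank_univ, hr] at this
  exact_mod_cast this

end Matroid.IsRelaxation

section Permutations

variable {n : ℕ}

lemma mem_prefFinset {π : Equiv.Perm (Fin n)} {m : ℕ} {x : Fin n} :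
    x ∈ prefFinset π m ↔ (π.symm x : ℕ) < m := by
  simp [prefFinset, ← π.eq_symm_apply]

lemma card_prefFinset (π : Equiv.Perm (Fin n)) {m : ℕ} (hm : m ≤ n) : #(prefFinset π m) = m := by
  rw [prefFinset, card_image_of_injective _ π.injective, Fin.card_filter_val_lt, min_eq_right hm]

lemma prefFinset_mono (π : Equiv.Perm (Fin n)) : Monotone (prefFinset π) :=
  fun _ _ h _ hx => mem_prefFinset.2 ((mem_prefFinset.1 hx).trans_le h)

lemma card_filter_prefFinset_eq {T : Finset (Fin n)} {r : ℕ} (hT : #T = r) :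
    #{π : Equiv.Perm (Fin n) | prefFinset π r = T} = r.factorial * (n - r).factorial := by
  subst hT
  have hprefixed := Numbering.card_prefixed T
  rw [Fintype.card_fin] at hprefixed
  rw [← hprefixed]
  refine card_equiv
    ((Equiv.inv _).trans (.equivCongr (.refl _) (finCongr (Fintype.card_fin n).symm))) fun π => ?_
  simp [Numbering.IsPrefix, Finset.ext_iff, mem_prefFinset, iff_comm]

lemma rankSeq_eq_ofFn (rk : Finset (Fin n) → ℕ) (π : Equiv.Perm (Fin n)) (ρ : ℕ → ℕ)
    (h : ∀ m ≤ n, rk (prefFinset π m) = ρ m) :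
    rankSeq rk π = List.ofFn fun j : Fin n => decide (ρ (j + 1) = ρ j + 1) := by
  unfold rankSeq
  congr
  funext j
  rw [h _ j.isLt, h _ j.isLt.le]

lemma Ginv_sub_Ginv_of_eqOn_compl (K : Type*) [Field K] {rk rk' : Finset (Fin n) → ℕ}
    (T : Finset (Fin n)) (h : Set.EqOn rk' rk {T}ᶜ) :
    Ginv K rk' - Ginv K rk = ∑ π with prefFinset π #T = T,
      (Finsupp.single (rankSeq rk' π) 1 - Finsupp.single (rankSeq rk π) 1) := by
  rw [Ginv, Ginv, ← sum_sub_distrib, sum_filter]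
  refine sum_congr rfl fun π _ => ?_
  split_ifs with hπ
  · rfl
  have hpref : ∀ m ≤ n, rk' (prefFinset π m) = rk (prefFinset π m) := fun m hm =>
    h fun hmT => hπ (by rw [← Set.mem_singleton_iff.1 hmT, card_prefFinset π hm])
  rw [sub_eq_zero, rankSeq_eq_ofFn rk' π _ hpref]
  rfl

end Permutations

lemma tutte_sub_tutte_of_eqOn_compl (K : Type*) [Field K] {n : ℕ} (r : ℕ)
    {rk rk' : Finset (Fin n) → ℕ} (T : Finset (Fin n)) (h : Set.EqOn rk' rk {T}ᶜ) :
    tutte K r rk' - tutte K r rk =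
      (X 0 - 1) ^ (r - rk' T) * (X 1 - 1) ^ (#T - rk' T) -
        (X 0 - 1) ^ (r - rk T) * (X 1 - 1) ^ (#T - rk T) := by
  rw [tutte, tutte, ← sum_sub_distrib]
  exact sum_eq_single T (fun A _ hA => by rw [h hA, sub_self]) (by simp)

lemma List.ofFn_decide_val_lt {n r : ℕ} (hr : r ≤ n) :
    List.ofFn (fun j : Fin n => decide ((j : ℕ) < r)) =
      List.replicate r true ++ List.replicate (n - r) false := by
  refine List.ext_getElem (by simp; omega) fun i _ _ => ?_
  simp only [List.getElem_ofFn, List.getElem_append, List.getElem_replicate, List.length_replicate]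
  split_ifs <;> simp <;> omega

lemma List.ofFn_decide_val_succ_lt_or_eq {n r : ℕ} (h1 : 1 ≤ r) (hr : r < n) :
    List.ofFn (fun j : Fin n => decide ((j : ℕ) + 1 < r ∨ (j : ℕ) = r)) =
      List.replicate (r - 1) true ++ [false, true] ++ List.replicate (n - r - 1) false := by
  refine List.ext_getElem (by simp; omega) fun i _ _ => ?_
  simp only [List.getElem_ofFn, List.getElem_append, List.getElem_replicate, List.length_replicate,
    List.length_cons, List.length_nil, List.length_append]
  split_ifs
  · simp; omega
  · obtain rfl | rfl : i = r - 1 ∨ i = r := by omega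
    · simp; omega
    · simp [Nat.sub_sub_self h1]
  · simp; omega

namespace Matroid.IsRelaxation

variable {n r : ℕ} {M M' : Matroid (Fin n)} {H : Finset (Fin n)}
  (hrel : M'.IsRelaxation M ↑H) (hr : mrank M Set.univ = r)
  (hE : M.E = Set.univ) (hH : M.IsCircuit ↑H) (hF : M.IsFlat ↑H)
  {π : Equiv.Perm (Fin n)} (hπ : prefFinset π r = H)
include hrel hr hE hH hF hπ

lemma mrank_prefFinset {m : ℕ} (hm : m ≤ n) :
    mrank M ↑(prefFinset π m) = if m = r then r - 1 else min m r := by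
  have hcard := hrel.card_eq hr
  rcases lt_trichotomy m r with hlt | rfl | hgt
  · have hsub : prefFinset π m ⊂ H := by
      refine (hπ ▸ prefFinset_mono π hlt.le).ssubset_of_ne fun h => ?_
      have := card_prefFinset π hm
      rw [h] at this
      omega
    rw [hH.mrank_of_ssubset hsub, card_prefFinset π hm, if_neg hlt.ne, min_eq_left hlt.le]
  · rw [hπ, if_pos rfl, ← hrel.mrank_add_one hr hH, Nat.add_sub_cancel]
  · have hsub : H ⊂ prefFinset π m := by
      refine (hπ ▸ prefFinset_mono π hgt.le).ssubset_of_ne fun h => ?_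
      have := card_prefFinset π hm
      rw [← h] at this
      omega
    rw [hrel.mrank_of_ssuperset hr hE hH hF (coe_ssubset.2 hsub), if_neg hgt.ne',
      min_eq_right hgt.le]

lemma mrank_relaxation_prefFinset {m : ℕ} (hm : m ≤ n) :
    mrank M' ↑(prefFinset π m) = min m r := by
  by_cases hmr : m = r
  · rw [hmr, hπ, hrel.mrank_self hr, min_self]
  · have hne : (↑(prefFinset π m) : Set (Fin n)) ≠ ↑H := fun h => by
      have := card_prefFinset π hm
      rw [coe_inj.1 h, hrel.card_eq hr] at this
      exact hmr this.symm
    rw [hrel.mrank_eq hE hH hF hne, hrel.mrank_prefFinset hr hE hH hF hπ hm, if_neg hmr]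

lemma rankSeq_relaxation_of_prefFinset_eq :
    rankSeq (fun A : Finset (Fin n) => mrank M' ↑A) π =
      List.replicate r true ++ List.replicate (n - r) false := by
  have hrn : r ≤ n := by simpa [hrel.card_eq hr] using card_le_univ H
  rw [rankSeq_eq_ofFn _ π (min · r) fun m hm => hrel.mrank_relaxation_prefFinset hr hE hH hF hπ hm,
    ← List.ofFn_decide_val_lt hrn]
  congr
  funext j
  simp only [decide_eq_decide]
  omega

lemma rankSeq_of_prefFinset_eq :
    rankSeq (fun A : Finset (Fin n) => mrank M ↑A) π =
      List.replicate (r - 1) true ++ [false, true] ++ List.replicate (n - r - 1) false := by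
  have hk := hrel.mrank_add_one hr hH
  have hHne : H ≠ univ := fun h => by
    rw [h, coe_univ, hr] at hk
    omega
  have hrn : r < n := by simpa [hrel.card_eq hr] using (card_lt_iff_ne_univ H).2 hHne
  rw [rankSeq_eq_ofFn _ π _ fun m hm => hrel.mrank_prefFinset hr hE hH hF hπ hm,
    ← List.ofFn_decide_val_succ_lt_or_eq (by omega) hrn]
  congr
  funext j
  simp only [decide_eq_decide]
  split_ifs <;> omega

end Matroid.IsRelaxation

theorem relaxation_ginv_tutte_general (K : Type*) [Field K] (n r : ℕ) (M M' : Matroid (Fin n))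
    (hE : M.E = Set.univ) (hr : mrank M Set.univ = r) (H : Set (Fin n))
    (hcirc : Minimal M.Dep H) (hflat : M.IsFlat H)
    (hbase : ∀ B : Set (Fin n), M'.IsBase B ↔ M.IsBase B ∨ B = H) :
    Ginv K (fun A : Finset (Fin n) => mrank M' ↑A) -
        Ginv K (fun A : Finset (Fin n) => mrank M ↑A) =
      ((r.factorial * (n - r).factorial : ℕ) : K) •
        (Finsupp.single (List.replicate r true ++ List.replicate (n - r) false) 1 -
          Finsupp.single
            (List.replicate (r - 1) true ++ [false, true] ++
              List.replicate (n - r - 1) false) 1) ∧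
    tutte K r (fun A : Finset (Fin n) => mrank M' ↑A) -
        tutte K r (fun A : Finset (Fin n) => mrank M ↑A) =
      X 0 + X 1 - X 0 * X 1 := by
  obtain ⟨H, rfl⟩ : ∃ T : Finset (Fin n), ↑T = H := ⟨H.toFinset, H.coe_toFinset⟩
  have hrel : M'.IsRelaxation M ↑H := hbase
  have hcard := hrel.card_eq hr
  have hoff : Set.EqOn (fun A : Finset (Fin n) => mrank M' ↑A) (fun A => mrank M ↑A) {H}ᶜ :=
    fun A hA => hrel.mrank_eq hE hcirc hflat (coe_injective.ne hA)
  constructor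
  · rw [Ginv_sub_Ginv_of_eqOn_compl K H hoff, hcard]
    rw [sum_congr rfl fun π hπ => by
        rw [hrel.rankSeq_relaxation_of_prefFinset_eq hr hE hcirc hflat (mem_filter.1 hπ).2,
          hrel.rankSeq_of_prefFinset_eq hr hE hcirc hflat (mem_filter.1 hπ).2],
      sum_const, card_filter_prefFinset_eq hcard, Nat.cast_smul_eq_nsmul]
  · rw [tutte_sub_tutte_of_eqOn_compl K r H hoff, hrel.mrank_self hr, hcard,
      ← hrel.mrank_add_one hr hcirc, Nat.sub_self, Nat.add_sub_cancel_left]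
    ring

/-- If `M′` is obtained from an `(n,r)`-matroid `M` by relaxing a
circuit-hyperplane `H`, then `G(M′) − G(M) = r!(n−r)!([1^r 0^{n−r}] − [1^{r−1} 0 1 0^{n−r−1}])`
and `T(M′) − T(M) = x + y − xy`. -/
theorem relaxation_ginv_tutte (K : Type*) [Field K] (n r : ℕ) (M M' : Matroid (Fin n))
    (hE : M.E = Set.univ) (hr : mrank M Set.univ = r) (H : Set (Fin n))
    (hcirc : Minimal M.Dep H) (hflat : M.IsFlat H) (hhyp : mrank M H = r - 1)
    (hE' : M'.E = Set.univ)
    (hbase : ∀ B : Set (Fin n), M'.IsBase B ↔ M.IsBase B ∨ B = H) :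
    Ginv K (fun A : Finset (Fin n) => mrank M' ↑A) -
        Ginv K (fun A : Finset (Fin n) => mrank M ↑A) =
      ((r.factorial * (n - r).factorial : ℕ) : K) •
        (Finsupp.single (List.replicate r true ++ List.replicate (n - r) false) 1 -
          Finsupp.single
            (List.replicate (r - 1) true ++ [false, true] ++
              List.replicate (n - r - 1) false) 1) ∧
    tutte K r (fun A : Finset (Fin n) => mrank M' ↑A) -
        tutte K r (fun A : Finset (Fin n) => mrank M ↑A) =
      X 0 + X 1 - X 0 * X 1 :=
  relaxation_ginv_tutte_general K n r M M' hE hr H hcirc hflat hbase
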